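/- Let N ∈ ℕ, t_j = −1 + (j−2)/N for j = 1,…,2N+3, and ℓ ∈ ℕ with ℓ ≥ 1. Define v^{[ℓ]} = 𝓛_N((t_k^ℓ)_{k=2}^{2N+2}) ∈ ℝ^{2N+3}. Then sup_{u ∈ [−1,1]} | N Σ_{j=1}^{2N+3} v^{[ℓ]}_j σ(u − t_j) − u^ℓ | ≤ 2ℓ/N, where σ(u) = max(u,0). -/

import Mathlib

open Finset

/-- ReLU activation. -/
noncomputable def relu (u : ℝ) : ℝ := max u 0

/-- The knots `t_j = -1 + (j-2)/N` (with `j` 1-based, `j = 1, …, 2N+3`). -/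
noncomputable def knot (N j : ℕ) : ℝ := -1 + ((j : ℝ) - 2) / (N : ℝ)

/-- The linear operator `𝓛_N : ℝ^{2N+1} → ℝ^{2N+3}` (second order difference operator),
acting on families indexed by `2, …, 2N+2` and producing entries indexed by `1, …, 2N+3`. -/
noncomputable def Lop (N : ℕ) (ζ : ℕ → ℝ) (i : ℕ) : ℝ :=
  if i = 1 then ζ 2
  else if i = 2 then ζ 3 - 2 * ζ 2
  else if i ≤ 2 * N + 1 then ζ (i - 1) - 2 * ζ i + ζ (i + 1)
  else if i = 2 * N + 2 then ζ (2 * N + 1) - 2 * ζ (2 * N + 2)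
  else ζ (2 * N + 2)

/-!
On each cell `[t_m, t_{m+1}]` of the grid, `N ∑_j v_j σ(u - t_j)` only sees the knots `t_j ≤ u`,
and summation by parts turns it into the linear interpolant `(1 - λ) ζ_m + λ ζ_{m+1}` of
`ζ_k = t_k ^ ℓ`, where `λ = N (u - t_m) ∈ [0, 1]`. Since `x ↦ x ^ ℓ` is `ℓ`-Lipschitz on `[-1, 1]`
and both knots are within `1/N` of `u`, the interpolation error is at most `ℓ / N`.
-/

lemma abs_pow_sub_pow_le_of_abs_le_one {x y : ℝ} (hx : |x| ≤ 1) (hy : |y| ≤ 1) (n : ℕ) :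
    |x ^ n - y ^ n| ≤ n * |x - y| := by
  have hmax : max |x| |y| ^ (n - 1) ≤ 1 := pow_le_one₀ (by positivity) (max_le hx hy)
  calc |x ^ n - y ^ n| ≤ |x - y| * n * max |x| |y| ^ (n - 1) := abs_pow_sub_pow_le ..
    _ ≤ |x - y| * n * 1 := by gcongr
    _ = n * |x - y| := by ring

lemma abs_convex_comb_sub_le {a b c ε t : ℝ} (ht₀ : 0 ≤ t) (ht₁ : t ≤ 1)
    (ha : |a - c| ≤ ε) (hb : |b - c| ≤ ε) : |(1 - t) * a + t * b - c| ≤ ε := by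
  calc |(1 - t) * a + t * b - c| = |(1 - t) * (a - c) + t * (b - c)| := by ring_nf
    _ ≤ (1 - t) * |a - c| + t * |b - c| := by
        refine (abs_add_le _ _).trans_eq ?_
        rw [abs_mul, abs_mul, abs_of_nonneg (by linarith), abs_of_nonneg ht₀]
    _ ≤ (1 - t) * ε + t * ε := by gcongr
    _ = ε := by ring

lemma exists_nat_le_le_add_one {x : ℝ} {n : ℕ} (hn : 1 ≤ n) (hx₀ : 0 ≤ x) (hxn : x ≤ n) :
    ∃ k : ℕ, k + 1 ≤ n ∧ (k : ℝ) ≤ x ∧ x ≤ k + 1 := by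
  rcases hxn.lt_or_eq with hlt | rfl
  · exact ⟨⌊x⌋₊, (Nat.floor_lt hx₀).2 hlt, Nat.floor_le hx₀, (Nat.lt_floor_add_one x).le⟩
  · exact ⟨n - 1, by omega, by simp [Nat.cast_sub hn], by simp [Nat.cast_sub hn]⟩

section Knots

variable {N : ℕ}

lemma knot_add_two (k : ℕ) : knot N (k + 2) = -1 + k / N := by
  simp [knot]

lemma knot_succ (hN : 1 ≤ N) (j : ℕ) : knot N (j + 1) = knot N j + 1 / N := by
  have : (N : ℝ) ≠ 0 := by positivity
  simp only [knot, Nat.cast_succ]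
  field_simp
  ring

lemma knot_mono (hN : 1 ≤ N) : Monotone (knot N) := by
  intro a b hab
  have : (0 : ℝ) < N := by positivity
  simp only [knot]
  gcongr

lemma abs_knot_le_one (hN : 1 ≤ N) {j : ℕ} (h₂ : 2 ≤ j) (hj : j ≤ 2 * N + 2) :
    |knot N j| ≤ 1 := by
  have hlo := knot_mono hN h₂
  have hhi := knot_mono hN hj
  have h2 : knot N 2 = -1 := by simp [knot]
  have h2N : knot N (2 * N + 2) = 1 := by
    have : (N : ℝ) ≠ 0 := by positivity
    simp only [knot, Nat.cast_add, Nat.cast_mul, Nat.cast_ofNat]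
    field_simp
    ring
  exact abs_le.2 ⟨by linarith, by linarith⟩

lemma exists_knot_cell (hN : 1 ≤ N) {u : ℝ} (hu : u ∈ Set.Icc (-1 : ℝ) 1) :
    ∃ m, 2 ≤ m ∧ m ≤ 2 * N + 1 ∧ knot N m ≤ u ∧ u ≤ knot N (m + 1) := by
  have hNr : (0 : ℝ) < N := by positivity
  obtain ⟨k, hk, hku, huk⟩ := exists_nat_le_le_add_one (x := N * (u + 1)) (n := 2 * N)
    (by omega) (by nlinarith [hu.1]) (by push_cast; nlinarith [hu.2])
  refine ⟨k + 2, by omega, by omega, ?_, ?_⟩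
  · rw [knot_add_two]
    have : (k : ℝ) / N ≤ u + 1 := by
      rw [div_le_iff₀ hNr]; linarith
    linarith
  · rw [show k + 2 + 1 = (k + 1) + 2 by ring, knot_add_two]
    have : u + 1 ≤ ((k + 1 : ℕ) : ℝ) / N := by
      rw [le_div_iff₀ hNr]; push_cast; linarith
    linarith

end Knots

section DifferenceOperator

variable {N : ℕ} (ζ : ℕ → ℝ)

lemma Lop_of_le {i : ℕ} (h₃ : 3 ≤ i) (hi : i ≤ 2 * N + 1) :
    Lop N ζ i = ζ (i - 1) - 2 * ζ i + ζ (i + 1) := by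
  rw [Lop, if_neg (by omega), if_neg (by omega), if_pos hi]

-- Summation by parts: `∑_{j ≤ m} (𝓛_N ζ)_j` telescopes to `ζ_{m+1} - ζ_m`.
lemma sum_Lop_mul_sub_knot (hN : 1 ≤ N) (u : ℝ) {m : ℕ} (h₂ : 2 ≤ m) (hm : m ≤ 2 * N + 1) :
    ∑ j ∈ Icc 1 m, Lop N ζ j * (u - knot N j)
      = ζ m / N + (u - knot N m) * (ζ (m + 1) - ζ m) := by
  induction m, h₂ using Nat.le_induction with
  | base =>
    have h₁₂ := knot_succ hN 1
    rw [show Icc 1 2 = {1, 2} from rfl, sum_pair (by decide)]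
    simp only [Lop, if_pos, if_neg (by decide : (2 : ℕ) ≠ 1)]
    rw [h₁₂]
    ring
  | succ m h₂ ih =>
    rw [sum_Icc_succ_top (by omega), ih (by omega), Lop_of_le ζ (by omega) hm,
      knot_succ hN m, Nat.add_sub_cancel]
    ring

lemma sum_mul_relu_eq_sum_Icc (c t : ℕ → ℝ) {u : ℝ} {m n : ℕ} (hmn : m ≤ n)
    (hle : ∀ j ≤ m, t j ≤ u) (hge : ∀ j, m < j → u ≤ t j) :
    ∑ j ∈ Icc 1 n, c j * relu (u - t j) = ∑ j ∈ Icc 1 m, c j * (u - t j) := by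
  have hrelu : ∀ j ∈ Icc 1 n, c j * relu (u - t j) = if j ≤ m then c j * (u - t j) else 0 := by
    intro j _
    split_ifs with hj
    · rw [relu, max_eq_left (by linarith [hle j hj])]
    · rw [relu, max_eq_right (by linarith [hge j (by omega)]), mul_zero]
  rw [sum_congr rfl hrelu, ← sum_filter]
  congr 1
  ext j
  simp only [mem_filter, mem_Icc]
  omega

lemma spline_eq_interpolant (hN : 1 ≤ N) {u : ℝ} {m : ℕ} (h₂ : 2 ≤ m) (hm : m ≤ 2 * N + 1)
    (hmu : knot N m ≤ u) (hum : u ≤ knot N (m + 1)) :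
    (N : ℝ) * ∑ j ∈ Icc 1 (2 * N + 3), Lop N ζ j * relu (u - knot N j)
      = (1 - N * (u - knot N m)) * ζ m + N * (u - knot N m) * ζ (m + 1) := by
  have hNr : (N : ℝ) ≠ 0 := by positivity
  rw [sum_mul_relu_eq_sum_Icc _ _ (by omega) (fun j hj => (knot_mono hN hj).trans hmu)
      (fun j hj => hum.trans (knot_mono hN hj)), sum_Lop_mul_sub_knot ζ hN u h₂ hm]
  field_simp
  ring

end DifferenceOperator

theorem monomial_spline_approx_general (N ℓ : ℕ) (hN : 1 ≤ N) :
    ∀ u ∈ Set.Icc (-1 : ℝ) 1,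
      |(N : ℝ) * (∑ j ∈ Finset.Icc 1 (2 * N + 3),
          Lop N (fun k => knot N k ^ ℓ) j * relu (u - knot N j)) - u ^ ℓ|
        ≤ 2 * (ℓ : ℝ) / (N : ℝ) := by
  intro u hu
  obtain ⟨m, h₂, hm, hmu, hum⟩ := exists_knot_cell hN hu
  have hNr : (0 : ℝ) < N := by positivity
  have hstep := knot_succ hN m
  have hu₁ : |u| ≤ 1 := abs_le.2 hu
  have herr : ∀ j, 2 ≤ j → j ≤ 2 * N + 2 → |knot N j - u| ≤ 1 / N →
      |knot N j ^ ℓ - u ^ ℓ| ≤ ℓ / N := fun j hj₂ hj hju =>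
    calc |knot N j ^ ℓ - u ^ ℓ| ≤ ℓ * |knot N j - u| :=
          abs_pow_sub_pow_le_of_abs_le_one (abs_knot_le_one hN hj₂ hj) hu₁ ℓ
      _ ≤ ℓ * (1 / N) := by gcongr
      _ = ℓ / N := by ring
  have hslope : N * (u - knot N m) ≤ 1 := by
    rw [← le_div_iff₀' hNr]; linarith
  rw [spline_eq_interpolant _ hN h₂ hm hmu hum]
  calc _ ≤ (ℓ : ℝ) / N :=
        abs_convex_comb_sub_le (by nlinarith) hslope
          (herr m h₂ (by omega) (abs_le.2 ⟨by linarith, by linarith⟩))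
          (herr (m + 1) (by omega) (by omega) (abs_le.2 ⟨by linarith, by linarith⟩))
    _ ≤ 2 * ℓ / N := by gcongr; linarith

/-- Approximation of the monomial `u^ℓ` by the spline combination
`N Σ_j v^{[ℓ]}_j σ(u − t_j)` with `v^{[ℓ]} = 𝓛_N((t_k^ℓ)_k)`, with rate `2ℓ/N`. -/
theorem monomial_spline_approx (N ℓ : ℕ) (hN : 1 ≤ N) (hℓ : 1 ≤ ℓ) :
    ∀ u ∈ Set.Icc (-1 : ℝ) 1,
      |(N : ℝ) * (∑ j ∈ Finset.Icc 1 (2 * N + 3),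
          Lop N (fun k => knot N k ^ ℓ) j * relu (u - knot N j)) - u ^ ℓ|
        ≤ 2 * (ℓ : ℝ) / (N : ℝ) :=
  monomial_spline_approx_general N ℓ hN
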